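/- Let A ∈ ℝ^{M×N} with full row rank and row-space projection P = A†A, and let x, c_i ∈ ℝ^N, r ≥ 0. The set of minimal-norm targeted attacks is nonempty: there exists w* achieving min{‖w‖₂ : ∃ t, ‖t − c_i‖₂ ≤ r, A(x + w) = A t}, and the minimum equals max(‖P(c_i − x)‖₂ − r, 0). -/

import Mathlib

/-!
Write `u = cᵢ - x`. The matrix `P = A†A` is a symmetric idempotent, hence an orthogonal projection
and a contraction; moreover `A P = A` and `P` factors through `A`. The constraint
`A (x + w) = A t` therefore forces `P w = P (t - x)`, and
`‖P u‖ ≤ ‖P (t - x)‖ + ‖P (t - cᵢ)‖ ≤ ‖w‖ + r`. Conversely, moving the target from `cᵢ` along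
`-P u` by `min r ‖P u‖` leaves the perturbation `w ∈ range P` of norm exactly `max (‖P u‖ - r) 0`.
-/

/-- Moore–Penrose pseudoinverse of a full-row-rank matrix: `A† = Aᵀ (A Aᵀ)⁻¹`. -/
noncomputable def moorePenrosePinv {M N : ℕ} (A : Matrix (Fin M) (Fin N) ℝ) :
    Matrix (Fin N) (Fin M) ℝ :=
  A.transpose * (A * A.transpose)⁻¹

theorem exists_mul_le_and_one_sub_mul_eq_max {p r : ℝ} (hr : 0 ≤ r) :
    ∃ s : ℝ, 0 ≤ s ∧ s ≤ 1 ∧ s * p ≤ r ∧ (1 - s) * p = max (p - r) 0 := by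
  rcases le_or_gt p r with hle | hlt
  · exact ⟨1, zero_le_one, le_rfl, by rwa [one_mul],
      by rw [sub_self, zero_mul, max_eq_right (by linarith)]⟩
  · have hp : 0 < p := hr.trans_lt hlt
    refine ⟨r / p, by positivity, (div_le_one hp).mpr hlt.le, ?_, ?_⟩
    · rw [div_mul_cancel₀ _ hp.ne']
    · rw [max_eq_left (by linarith), sub_mul, div_mul_cancel₀ _ hp.ne', one_mul]

section TargetedAttack

variable {E F : Type*} [SeminormedAddCommGroup E] [NormedSpace ℝ E] [AddCommGroup F]
  [Module ℝ F] {L : E →ₗ[ℝ] F} {P : E →ₗ[ℝ] E}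

theorem map_add_smul_eq_map_sub_smul (hLP : L ∘ₗ P = L) (x c : E) (s : ℝ) :
    L (x + (1 - s) • P (c - x)) = L (c - s • P (c - x)) := by
  have hLP' : L (P (c - x)) = L (c - x) := congr($hLP (c - x))
  generalize P (c - x) = u at hLP' ⊢
  simp only [map_add, map_sub, map_smul, hLP']
  module

theorem norm_apply_sub_le_of_map_add_eq (hker : LinearMap.ker L ≤ LinearMap.ker P)
    (hP : ∀ v, ‖P v‖ ≤ ‖v‖) {x c w t : E} (h : L (x + w) = L t) :
    ‖P (c - x)‖ ≤ ‖w‖ + ‖t - c‖ := by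
  have hPw : P w = P (t - x) := by
    rw [← sub_eq_zero, ← map_sub]
    refine hker ?_
    rw [LinearMap.mem_ker, map_sub, map_sub, ← h, map_add]
    abel
  calc ‖P (c - x)‖ = ‖P w - P (t - c)‖ := by rw [hPw, ← map_sub]; congr 2; abel
    _ ≤ ‖P w‖ + ‖P (t - c)‖ := norm_sub_le _ _
    _ ≤ ‖w‖ + ‖t - c‖ := add_le_add (hP w) (hP _)

theorem isLeast_norm_of_map_add_eq_map_closedBall (hLP : L ∘ₗ P = L)
    (hker : LinearMap.ker L ≤ LinearMap.ker P) (hP : ∀ v, ‖P v‖ ≤ ‖v‖) (x c : E)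
    {r : ℝ} (hr : 0 ≤ r) :
    IsLeast {d : ℝ | ∃ w t : E, ‖t - c‖ ≤ r ∧ L (x + w) = L t ∧ d = ‖w‖}
      (max (‖P (c - x)‖ - r) 0) := by
  refine ⟨?_, ?_⟩
  · obtain ⟨s, hs0, hs1, hsr, hsw⟩ := exists_mul_le_and_one_sub_mul_eq_max (p := ‖P (c - x)‖) hr
    refine ⟨(1 - s) • P (c - x), c - s • P (c - x), ?_, map_add_smul_eq_map_sub_smul hLP x c s, ?_⟩
    · rwa [sub_sub_cancel_left, norm_neg, norm_smul, Real.norm_of_nonneg hs0]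
    · rw [norm_smul, Real.norm_of_nonneg (sub_nonneg.mpr hs1), hsw]
  · rintro d ⟨w, t, hdist, h, rfl⟩
    have := norm_apply_sub_le_of_map_add_eq (c := c) hker hP h
    exact max_le (by linarith) (norm_nonneg w)

end TargetedAttack

theorem LinearMap.IsSymmetricProjection.norm_apply_le {𝕜 E : Type*} [RCLike 𝕜]
    [NormedAddCommGroup E] [InnerProductSpace 𝕜 E] {p : E →ₗ[𝕜] E}
    (hp : p.IsSymmetricProjection) (v : E) : ‖p v‖ ≤ ‖v‖ := by
  obtain ⟨K, _, rfl⟩ := LinearMap.isSymmetricProjection_iff_eq_coe_starProjection.mp hp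
  exact K.norm_starProjection_apply_le v

namespace Matrix

theorem isUnit_of_rank_eq_card {n K : Type*} [Fintype n] [DecidableEq n] [Field K]
    {A : Matrix n n K} (h : A.rank = Fintype.card n) : IsUnit A := by
  rw [← mulVec_surjective_iff_isUnit, ← coe_mulVecLin, ← LinearMap.range_eq_top]
  exact Submodule.eq_top_of_finrank_eq (by rw [← rank, h, Module.finrank_fintype_fun_eq_card])

theorem isUnit_mul_transpose_of_rank_eq_card {m n R : Type*} [Fintype m] [Fintype n]
    [DecidableEq m] [Field R] [LinearOrder R] [IsStrictOrderedRing R] {A : Matrix m n R}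
    (h : A.rank = Fintype.card m) : IsUnit (A * Aᵀ) :=
  isUnit_of_rank_eq_card (by rw [rank_self_mul_transpose, h])

end Matrix

section MoorePenrose

variable {M N : ℕ} {A : Matrix (Fin M) (Fin N) ℝ}

theorem mul_moorePenrosePinv (hA : A.rank = M) : A * moorePenrosePinv A = 1 := by
  have hG := Matrix.isUnit_mul_transpose_of_rank_eq_card (hA.trans (Fintype.card_fin M).symm)
  rw [moorePenrosePinv, ← Matrix.mul_assoc,
    Matrix.mul_nonsing_inv _ ((Matrix.isUnit_iff_isUnit_det _).mp hG)]

theorem isHermitian_moorePenrosePinv_mul (A : Matrix (Fin M) (Fin N) ℝ) :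
    (moorePenrosePinv A * A).IsHermitian := by
  rw [Matrix.IsHermitian, Matrix.conjTranspose_eq_transpose_of_trivial, moorePenrosePinv,
    Matrix.transpose_mul, Matrix.transpose_mul, Matrix.transpose_nonsing_inv,
    Matrix.transpose_mul, Matrix.transpose_transpose, Matrix.mul_assoc]

theorem isIdempotentElem_moorePenrosePinv_mul (hA : A.rank = M) :
    IsIdempotentElem (moorePenrosePinv A * A) := by
  rw [IsIdempotentElem, Matrix.mul_assoc, ← Matrix.mul_assoc A, mul_moorePenrosePinv hA,
    Matrix.one_mul]

theorem isSymmetricProjection_toEuclideanLin_moorePenrosePinv_mul (hA : A.rank = M) :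
    (Matrix.toEuclideanLin (moorePenrosePinv A * A)).IsSymmetricProjection :=
  ⟨(isIdempotentElem_moorePenrosePinv_mul hA).map (Matrix.toLpLinAlgEquiv 2),
    Matrix.isSymmetric_toEuclideanLin_iff.mpr (isHermitian_moorePenrosePinv_mul A)⟩

end MoorePenrose

theorem minimal_norm_targeted_attack_value_general {M N : ℕ}
    (A : Matrix (Fin M) (Fin N) ℝ) (hrank : A.rank = M)
    (P : EuclideanSpace ℝ (Fin N) →ₗ[ℝ] EuclideanSpace ℝ (Fin N))
    (hP : P = Matrix.toEuclideanLin (moorePenrosePinv A * A))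
    (x ci : EuclideanSpace ℝ (Fin N)) (r : ℝ) (hr : 0 ≤ r) :
    IsLeast {d : ℝ | ∃ (w t : EuclideanSpace ℝ (Fin N)), ‖t - ci‖ ≤ r ∧
        Matrix.toEuclideanLin A (x + w) = Matrix.toEuclideanLin A t ∧ d = ‖w‖}
      (max (‖P (ci - x)‖ - r) 0) := by
  have hfactor : P = Matrix.toEuclideanLin (moorePenrosePinv A) ∘ₗ Matrix.toEuclideanLin A := by
    rw [hP, Matrix.toLpLin_mul_same]
  refine isLeast_norm_of_map_add_eq_map_closedBall ?_ ?_ ?_ x ci hr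
  · rw [hfactor, ← LinearMap.comp_assoc, ← Matrix.toLpLin_mul_same, mul_moorePenrosePinv hrank,
      Matrix.toLpLin_one, LinearMap.id_comp]
  · rw [hfactor]
    exact LinearMap.ker_le_ker_comp _ _
  · rw [hP]
    exact (isSymmetricProjection_toEuclideanLin_moorePenrosePinv_mul hrank).norm_apply_le

/-- the minimal-norm targeted attack problem
`min { ‖w‖ : ∃ t, ‖t − c_i‖ ≤ r, A(x + w) = A t }` has a minimizer and its minimum value is
`max (‖P(c_i − x)‖ − r) 0`, where `P = A†A`. -/
theorem minimal_norm_targeted_attack_value {M N : ℕ} (hMN : M ≤ N)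
    (A : Matrix (Fin M) (Fin N) ℝ) (hrank : A.rank = M)
    (P : EuclideanSpace ℝ (Fin N) →ₗ[ℝ] EuclideanSpace ℝ (Fin N))
    (hP : P = Matrix.toEuclideanLin (moorePenrosePinv A * A))
    (x ci : EuclideanSpace ℝ (Fin N)) (r : ℝ) (hr : 0 ≤ r) :
    IsLeast {d : ℝ | ∃ (w t : EuclideanSpace ℝ (Fin N)), ‖t - ci‖ ≤ r ∧
        Matrix.toEuclideanLin A (x + w) = Matrix.toEuclideanLin A t ∧ d = ‖w‖}
      (max (‖P (ci - x)‖ - r) 0) :=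
  minimal_norm_targeted_attack_value_general A hrank P hP x ci r hr
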